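/- arXiv:2303.09251 — 2 statements merged into one kernel-verified Lean document; each statement's English description precedes it below -/
import Mathlib

section
/- Let σ ∈ S_n and A = {i₁ < … < i_k} ⊆ {1,…,n−1} with σ⁻¹(i_k) < … < σ⁻¹(i₁) < σ⁻¹(n). Define A^σ = {1 ≤ j < n : ∃ i ∈ A, i ≤ j and σ⁻¹(i) ≤ σ⁻¹(j) ≤ σ⁻¹(n)} and σ^A = (i₁,…,i_k,n)·σ (cycle notation). Then ℓ(σ^A) − ℓ(σ) = 2|A^σ| − |A|, where ℓ counts inversions. -/
/-- The number of inversions of a permutation. -/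
def permLen {n : ℕ} (σ : Equiv.Perm (Fin n)) : ℕ :=
  (Finset.univ.filter (fun p : Fin n × Fin n => p.1 < p.2 ∧ σ p.2 < σ p.1)).card

/-- The product `t_{i_k}⋯t_{i_1}·σ = (i₁,…,i_k,n)·σ`, where `t_i = (i, n)`. -/
def chainProd {n k : ℕ} (σ : Equiv.Perm (Fin (n + 1))) (i : Fin k → Fin (n + 1))
    (m : ℕ) : Equiv.Perm (Fin (n + 1)) :=
  (((List.ofFn fun j => Equiv.swap (i j) (Fin.last n)).take m).reverse).prod * σ

/-!
Multiplying `σ` on the left by `t_{i₁}`, then `t_{i₂}`, … one transposition at a time, it suffices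
to know how one transposition changes the length: if `a < b` and `π⁻¹ a < π⁻¹ b`, then
`ℓ((a, b) π) = ℓ(π) + 1 + 2 N`, where `N` counts the `x` with `a < x < b` and
`π⁻¹ a < π⁻¹ x < π⁻¹ b`. Indeed only the pairs meeting `{a, b}` can change status; the pair
`{a, b}` becomes an inversion, and for every other `x` the pairs `{x, a}`, `{x, b}` together gain
two inversions when `x` lies in that window and keep their count otherwise. After the step with `t_{i₁}`
the remaining data satisfy the same hypotheses with `σ⁻¹(n)` replaced by `σ⁻¹(i₁)`, and `A^σ`
splits as `{i₁}`, the window of `i₁`, and the set `A'^{σ'}` of the remaining step.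
-/

open Finset Equiv

theorem ite_inversions_swap_sub {α β : Type*} [LinearOrder α] [LinearOrder β] {a b x : α}
    {u v w : β} (hab : a < b) (hvw : v < w) (hxa : x ≠ a) (hxb : x ≠ b) (hv : u ≠ v)
    (hw : u ≠ w) :
    ((if b < x ∧ u < v then (1 : ℤ) else 0) - (if a < x ∧ u < v then 1 else 0))
      + ((if a < x ∧ u < w then 1 else 0) - (if b < x ∧ u < w then 1 else 0))
      + (((if x < b ∧ v < u then 1 else 0) - (if x < a ∧ v < u then 1 else 0))
      + ((if x < a ∧ w < u then 1 else 0) - (if x < b ∧ w < u then 1 else 0)))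
      = 2 * if a < x ∧ x < b ∧ v < u ∧ u < w then 1 else 0 := by
  rcases hxa.lt_or_gt with h1 | h1 <;> rcases hxb.lt_or_gt with h2 | h2 <;>
    rcases hv.lt_or_gt with h3 | h3 <;> rcases hw.lt_or_gt with h4 | h4 <;>
    simp [h1, h2, h3, h4, h1.not_gt, h2.not_gt, h3.not_gt, h4.not_gt] <;> grind

theorem Finset.sum_sum_eq_of_eq_zero_off_pair {α M : Type*} [Fintype α] [DecidableEq α]
    [AddCommMonoid M] (D : α → α → M) {a b : α} (hab : a ≠ b)
    (hD : ∀ p q, p ∉ ({a, b} : Finset α) → q ∉ ({a, b} : Finset α) → D p q = 0) :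
    ∑ p, ∑ q, D p q = D a a + D a b + (D b a + D b b) +
      ∑ x ∈ ({a, b} : Finset α)ᶜ, (D a x + D b x + (D x a + D x b)) := by
  have split (f : α → M) : ∑ x, f x = f a + f b + ∑ x ∈ ({a, b} : Finset α)ᶜ, f x := by
    rw [← sum_add_sum_compl {a, b}, sum_pair hab]
  have outside : ∀ p ∈ ({a, b} : Finset α)ᶜ, ∑ q, D p q = D p a + D p b := fun p hp => by
    rw [split, sum_eq_zero fun q hq => hD p q (mem_compl.1 hp) (mem_compl.1 hq), add_zero]
  rw [split, sum_congr rfl outside, split (D a), split (D b), sum_add_distrib, sum_add_distrib,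
    sum_add_distrib, sum_add_distrib]
  abel

section Transposition

variable {n : ℕ}

def permWindow (ρ : Perm (Fin n)) (a b : Fin n) : Finset (Fin n) :=
  univ.filter fun x => a < x ∧ x < b ∧ ρ a < ρ x ∧ ρ x < ρ b

theorem permLen_inv (τ : Perm (Fin n)) : permLen τ⁻¹ = permLen τ := by
  refine card_bij' (fun p _ => (τ⁻¹ p.2, τ⁻¹ p.1)) (fun p _ => (τ p.2, τ p.1)) ?_ ?_
    (fun _ _ => by simp) (fun _ _ => by simp) <;>
  · intro p hp
    simp only [mem_filter, mem_univ, true_and] at hp ⊢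
    exact ⟨hp.2, by simpa using hp.1⟩

theorem permLen_eq_sum (τ : Perm (Fin n)) :
    (permLen τ : ℤ) = ∑ p, ∑ q, if p < q ∧ τ q < τ p then 1 else 0 := by
  rw [permLen, card_filter, ← univ_product_univ, sum_product]
  push_cast
  rfl

theorem permLen_mul_swap_eq_sum (ρ : Perm (Fin n)) (a b : Fin n) :
    (permLen (ρ * swap a b) : ℤ) =
      ∑ p, ∑ q, if swap a b p < swap a b q ∧ ρ q < ρ p then 1 else 0 := by
  rw [permLen_eq_sum, ← Equiv.sum_comp (swap a b)]
  refine sum_congr rfl fun p _ => ?_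
  rw [← Equiv.sum_comp (swap a b)]
  simp [Perm.mul_apply]

theorem permLen_mul_swap {ρ : Perm (Fin n)} {a b : Fin n} (hab : a < b) (hρ : ρ a < ρ b) :
    permLen (ρ * swap a b) = permLen ρ + 1 + 2 * (permWindow ρ a b).card := by
  set D : Fin n → Fin n → ℤ := fun p q =>
    (if swap a b p < swap a b q ∧ ρ q < ρ p then 1 else 0) - if p < q ∧ ρ q < ρ p then 1 else 0
  have hne : a ≠ b := hab.ne
  have hD : ∀ p q, p ∉ ({a, b} : Finset _) → q ∉ ({a, b} : Finset _) → D p q = 0 := by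
    intro p q hp hq
    simp only [mem_insert, mem_singleton, not_or] at hp hq
    simp [D, swap_apply_of_ne_of_ne hp.1 hp.2, swap_apply_of_ne_of_ne hq.1 hq.2]
  have hpair : D a a + D a b + (D b a + D b b) = 1 := by
    simp [D, hab, hρ, hab.not_gt, hρ.not_gt]
  have hcross : ∀ x ∈ ({a, b} : Finset _)ᶜ, D a x + D b x + (D x a + D x b) =
      2 * if a < x ∧ x < b ∧ ρ a < ρ x ∧ ρ x < ρ b then 1 else 0 := by
    intro x hx
    simp only [mem_compl, mem_insert, mem_singleton, not_or] at hx
    simp only [D, swap_apply_left, swap_apply_right, swap_apply_of_ne_of_ne hx.1 hx.2]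
    exact ite_inversions_swap_sub hab hρ hx.1 hx.2 (ρ.injective.ne hx.1) (ρ.injective.ne hx.2)
  have hwindow : ((permWindow ρ a b).card : ℤ) =
      ∑ x ∈ ({a, b} : Finset _)ᶜ, if a < x ∧ x < b ∧ ρ a < ρ x ∧ ρ x < ρ b then 1 else 0 := by
    rw [permWindow, card_filter, ← sum_add_sum_compl {a, b}, sum_pair hne]
    simp
  have hdiff : (permLen (ρ * swap a b) : ℤ) - permLen ρ = ∑ p, ∑ q, D p q := by
    rw [permLen_mul_swap_eq_sum, permLen_eq_sum, ← sum_sub_distrib]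
    exact sum_congr rfl fun p _ => (sum_sub_distrib _ _).symm
  rw [sum_sum_eq_of_eq_zero_off_pair D hne hD, hpair, sum_congr rfl hcross, ← mul_sum,
    ← hwindow] at hdiff
  omega

theorem permLen_swap_mul {π : Perm (Fin n)} {a b : Fin n} (hab : a < b) (hπ : π⁻¹ a < π⁻¹ b) :
    permLen (swap a b * π) = permLen π + 1 + 2 * (permWindow π⁻¹ a b).card := by
  rw [← permLen_inv, ← permLen_inv π, mul_inv_rev, swap_inv]
  exact permLen_mul_swap hab hπ

end Transposition

section Chain

variable {n k : ℕ}

open scoped Classical in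
/-- The set `A^σ` of the paper, for `A = {i₁ < … < i_k}` given as the range of `i`. -/
def chainSpan (σ : Perm (Fin (n + 1))) (i : Fin k → Fin (n + 1)) : Finset (Fin (n + 1)) :=
  univ.filter fun j => j < Fin.last n ∧
    ∃ m, i m ≤ j ∧ σ⁻¹ (i m) ≤ σ⁻¹ j ∧ σ⁻¹ j ≤ σ⁻¹ (Fin.last n)

theorem chainProd_zero (σ : Perm (Fin (n + 1))) (i : Fin k → Fin (n + 1)) :
    chainProd σ i 0 = σ := by
  simp [chainProd]

theorem chainProd_succ (σ : Perm (Fin (n + 1))) (i : Fin (k + 1) → Fin (n + 1)) :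
    chainProd σ i (k + 1) = chainProd (swap (i 0) (Fin.last n) * σ) (Fin.tail i) k := by
  rw [chainProd, chainProd, List.take_of_length_le (by simp), List.take_of_length_le (by simp),
    List.ofFn_succ]
  simp [List.prod_append, mul_assoc, Fin.tail]

theorem inv_swap_mul_apply (σ : Perm (Fin (n + 1))) (a x : Fin (n + 1)) :
    (swap a (Fin.last n) * σ)⁻¹ x = σ⁻¹ (swap a (Fin.last n) x) := by
  rw [mul_inv_rev, swap_inv, Perm.mul_apply]

theorem mem_chainSpan_swap_mul_tail {σ : Perm (Fin (n + 1))} {i : Fin (k + 1) → Fin (n + 1)}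
    (hmono : StrictMono i) (j : Fin (n + 1)) :
    j ∈ chainSpan (swap (i 0) (Fin.last n) * σ) (Fin.tail i) ↔ j < Fin.last n ∧
      ∃ m : Fin k, i m.succ ≤ j ∧ σ⁻¹ (i m.succ) ≤ σ⁻¹ j ∧ σ⁻¹ j ≤ σ⁻¹ (i 0) := by
  simp only [chainSpan, mem_filter, mem_univ, true_and, Fin.tail, inv_swap_mul_apply,
    swap_apply_right]
  refine and_congr_right fun hj => exists_congr fun m => and_congr_right fun hmj => ?_
  have hm0 : i 0 < i m.succ := hmono m.succ_pos
  have hmlast : i m.succ < Fin.last n := hmj.trans_lt hj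
  rw [swap_apply_of_ne_of_ne hm0.ne' hmlast.ne, swap_apply_of_ne_of_ne (hm0.trans_le hmj).ne' hj.ne]

theorem chainSpan_succ {σ : Perm (Fin (n + 1))} {i : Fin (k + 1) → Fin (n + 1)}
    (hmono : StrictMono i) (hi0 : i 0 < Fin.last n) (hσ : σ⁻¹ (i 0) < σ⁻¹ (Fin.last n)) :
    chainSpan σ i = insert (i 0) (chainSpan (swap (i 0) (Fin.last n) * σ) (Fin.tail i) ∪
      permWindow σ⁻¹ (i 0) (Fin.last n)) := by
  ext j
  rw [mem_insert, mem_union, mem_chainSpan_swap_mul_tail hmono]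
  simp only [chainSpan, permWindow, mem_filter, mem_univ, true_and]
  constructor
  · rintro ⟨hj, m, hmj, hσm, hσj⟩
    by_cases hj0 : j = i 0
    · exact .inl hj0
    have hjlast : σ⁻¹ j < σ⁻¹ (Fin.last n) := hσj.lt_of_ne (σ⁻¹.injective.ne hj.ne)
    rcases le_or_gt (σ⁻¹ j) (σ⁻¹ (i 0)) with hle | hlt
    · obtain ⟨m, rfl⟩ : ∃ m' : Fin k, m'.succ = m := Fin.exists_succ_eq.2 fun hm => hj0 <|
        σ⁻¹.injective (hle.antisymm (hm ▸ hσm))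
      exact .inr (.inl ⟨hj, m, hmj, hσm, hle⟩)
    · exact .inr (.inr ⟨(hmono.monotone m.zero_le |>.trans hmj).lt_of_ne' hj0, hj, hlt, hjlast⟩)
  · rintro (rfl | ⟨hj, m, hmj, hσm, hσj⟩ | ⟨h0j, hj, hσ0j, hσj⟩)
    · exact ⟨hi0, 0, le_rfl, le_rfl, hσ.le⟩
    · exact ⟨hj, m.succ, hmj, hσm, hσj.trans hσ.le⟩
    · exact ⟨hj, 0, h0j.le, hσ0j.le, hσj.le⟩

theorem card_chainSpan_succ {σ : Perm (Fin (n + 1))} {i : Fin (k + 1) → Fin (n + 1)}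
    (hmono : StrictMono i) (hi0 : i 0 < Fin.last n) (hσ : σ⁻¹ (i 0) < σ⁻¹ (Fin.last n)) :
    (chainSpan σ i).card = (chainSpan (swap (i 0) (Fin.last n) * σ) (Fin.tail i)).card + 1 +
      (permWindow σ⁻¹ (i 0) (Fin.last n)).card := by
  have hdisj : Disjoint (chainSpan (swap (i 0) (Fin.last n) * σ) (Fin.tail i))
      (permWindow σ⁻¹ (i 0) (Fin.last n)) := by
    refine disjoint_left.2 fun j hj hw => ?_
    obtain ⟨-, -, -, hσj⟩ := ((mem_chainSpan_swap_mul_tail hmono j).1 hj).2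
    simp only [permWindow, mem_filter, mem_univ, true_and] at hw
    exact hw.2.2.1.not_ge hσj
  have hnotin : i 0 ∉ chainSpan (swap (i 0) (Fin.last n) * σ) (Fin.tail i) ∪
      permWindow σ⁻¹ (i 0) (Fin.last n) := by
    simp only [mem_union, mem_chainSpan_swap_mul_tail hmono, permWindow, mem_filter, mem_univ,
      true_and, lt_self_iff_false, false_and, or_false, not_and, not_exists]
    exact fun _ m hm => ((hmono m.succ_pos).not_ge hm).elim
  rw [chainSpan_succ hmono hi0 hσ, card_insert_of_notMem hnotin, card_union_of_disjoint hdisj]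
  ring

theorem permLen_chainProd_add (σ : Perm (Fin (n + 1))) (i : Fin k → Fin (n + 1))
    (hmono : StrictMono i) (hlt : ∀ j, i j < Fin.last n)
    (hdec : ∀ a b : Fin k, a < b → σ⁻¹ (i b) < σ⁻¹ (i a))
    (hlast : ∀ a : Fin k, σ⁻¹ (i a) < σ⁻¹ (Fin.last n)) :
    permLen (chainProd σ i k) + k = permLen σ + 2 * (chainSpan σ i).card := by
  induction k generalizing σ with
  | zero => simp [chainProd_zero, chainSpan]
  | succ k ih =>
    have htail : ∀ m : Fin k, (swap (i 0) (Fin.last n) * σ)⁻¹ (i m.succ) = σ⁻¹ (i m.succ) :=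
      fun m => by
        rw [inv_swap_mul_apply, swap_apply_of_ne_of_ne (hmono m.succ_pos).ne' (hlt _).ne]
    have hnew_last : (swap (i 0) (Fin.last n) * σ)⁻¹ (Fin.last n) = σ⁻¹ (i 0) := by
      rw [inv_swap_mul_apply, swap_apply_right]
    have ih' := ih (swap (i 0) (Fin.last n) * σ) (Fin.tail i)
      (hmono.comp (Fin.strictMono_succ)) (fun m => hlt m.succ)
      (fun a b hab => by simpa only [Fin.tail, htail] using hdec _ _ (Fin.succ_lt_succ_iff.2 hab))
      (fun a => by simpa only [Fin.tail, htail, hnew_last] using hdec 0 a.succ a.succ_pos)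
    rw [chainProd_succ, card_chainSpan_succ hmono (hlt 0) (hlast 0)]
    rw [permLen_swap_mul (hlt 0) (hlast 0)] at ih'
    omega

end Chain

open scoped Classical in
/-- for `A = {i₁ < … < i_k}` with
`σ⁻¹(i_k) < … < σ⁻¹(i₁) < σ⁻¹(n)`, setting
`A^σ = {j < n : ∃ i ∈ A, i ≤ j, σ⁻¹(i) ≤ σ⁻¹(j) ≤ σ⁻¹(n)}` and
`σ^A = (i₁,…,i_k,n)·σ`, one has `ℓ(σ^A) − ℓ(σ) = 2|A^σ| − |A|`
(stated additively as `ℓ(σ^A) + |A| = ℓ(σ) + 2|A^σ|`). -/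
theorem stmt_11 {n k : ℕ} (σ : Equiv.Perm (Fin (n + 1)))
    (i : Fin k → Fin (n + 1)) (hmono : StrictMono i)
    (hlt : ∀ j, i j < Fin.last n)
    (hdec : ∀ a b : Fin k, a < b → σ⁻¹ (i b) < σ⁻¹ (i a))
    (hlast : ∀ a : Fin k, σ⁻¹ (i a) < σ⁻¹ (Fin.last n)) :
    permLen (chainProd σ i k) + k =
      permLen σ +
        2 * (Finset.univ.filter (fun j : Fin (n + 1) => j < Fin.last n ∧
          ∃ m : Fin k, i m ≤ j ∧ σ⁻¹ (i m) ≤ σ⁻¹ j ∧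
            σ⁻¹ j ≤ σ⁻¹ (Fin.last n))).card :=
  permLen_chainProd_add σ i hmono hlt hdec hlast
end

section
/- In S_{k+1}, the supremum (join) in the Bruhat order of the set of permutations {ω_{0,k}·(1,k+1), ω_{0,k}·(2,k+1), …, ω_{0,k}·(k,k+1)} is the longest element ω_{0,k+1}. -/
/-- The Bruhat order on the symmetric group. -/
def permBruhatLE {n : ℕ} (u v : Equiv.Perm (Fin n)) : Prop :=
  Relation.ReflTransGen
    (fun x y => (∃ a b : Fin n, a ≠ b ∧ y = Equiv.swap a b * x) ∧
      permLen x < permLen y) u v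

open Finset Equiv

def permInversions {n : ℕ} (σ : Perm (Fin n)) : Finset (Fin n × Fin n) :=
  {p | p.1 < p.2 ∧ σ p.2 < σ p.1}

lemma mem_permInversions {n : ℕ} {σ : Perm (Fin n)} {a b : Fin n} :
    (a, b) ∈ permInversions σ ↔ a < b ∧ σ b < σ a := by
  simp [permInversions]

lemma permLen_le_sq {n : ℕ} (σ : Perm (Fin n)) : permLen σ ≤ n * n :=
  (card_filter_le _ _).trans (by simp)

lemma permLen_lt_swap_mul {n : ℕ} {x : Perm (Fin n)} {P Q : Fin n} (hPQ : P < Q)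
    (hx : x P < x Q) : permLen x < permLen (swap (x P) (x Q) * x) := by
  rw [← mul_swap_eq_swap_mul]
  set t := swap P Q
  -- Moving an inversion of `x` along `t` gives an inversion of `x * t`, unless `t` reverses the
  -- order of the pair, and then the pair itself is one; `(P, Q)` is never reached.
  let G : Fin n × Fin n → Fin n × Fin n := fun p => if t p.1 < t p.2 then (t p.1, t p.2) else p
  change #(permInversions x) < #(permInversions (x * t))
  calc _ ≤ #((permInversions (x * t)).erase (P, Q)) := by
        refine card_le_card_of_injOn G ?_ ?_
        · rintro ⟨a, b⟩ hab
          rw [mem_coe, mem_permInversions] at hab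
          simp only [G, mem_coe]
          split_ifs with hc <;>
          · rw [mem_erase, ne_eq, Prod.mk.injEq, mem_permInversions]
            simp only [t, swap_apply_def, Perm.mul_apply] at hc ⊢
            split_ifs at hc ⊢ <;> grind
        · rintro ⟨a, b⟩ hab ⟨c, d⟩ hcd h
          simp only [mem_coe, mem_permInversions, G] at hab hcd h
          split_ifs at h <;> grind [swap_apply_self]
    _ < _ := card_erase_lt_of_mem (by simpa [mem_permInversions, t] using ⟨hPQ, hx⟩)

lemma apply_lt_of_permLen_lt_swap_mul {n : ℕ} {x : Perm (Fin n)} {P Q : Fin n} (hPQ : P < Q)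
    (hlen : permLen x < permLen (swap (x P) (x Q) * x)) : x P < x Q := by
  by_contra! hQP
  set y := swap (x P) (x Q) * x
  have hyP : y P = x Q := by simp [y]
  have hyQ : y Q = x P := by simp [y]
  have hy : swap (y P) (y Q) * y = x := by
    rw [hyP, hyQ, swap_comm, ← mul_assoc, swap_mul_self, one_mul]
  have hyPQ : y P < y Q := by
    rw [hyP, hyQ]
    exact hQP.lt_of_ne (x.injective.ne hPQ.ne')
  have := permLen_lt_swap_mul hPQ hyPQ
  rw [hy] at this
  omega

def permRank {n : ℕ} (σ : Perm (Fin n)) (p q : Fin n) : ℕ := #{a ∈ Iic p | q ≤ σ a}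

lemma permRank_le_swap_mul {n : ℕ} {x : Perm (Fin n)} {P Q : Fin n} (hPQ : P < Q)
    (hx : x P < x Q) (p q : Fin n) : permRank x p q ≤ permRank (swap (x P) (x Q) * x) p q := by
  rw [← mul_swap_eq_swap_mul]
  unfold permRank
  by_cases hq : q ≤ x P
  · refine card_le_card fun a ha => ?_
    rw [mem_filter, mem_Iic] at ha ⊢
    rw [Perm.mul_apply, swap_apply_def]
    split_ifs <;> grind
  -- If `q > x P`, position `Q` may drop out of the count, but then position `P < Q` enters it.
  · refine card_le_card_of_injOn (fun a => if a = Q then P else a) (fun a ha => ?_) ?_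
    · rw [mem_coe, mem_filter, mem_Iic] at ha ⊢
      dsimp only
      split_ifs <;> rw [Perm.mul_apply, swap_apply_def] <;> split_ifs <;> grind
    · intro a ha b hb hab
      simp only [coe_filter, mem_Iic, Set.mem_ofPred_eq] at ha hb hab
      split_ifs at hab <;> grind

lemma permRank_le_swap_mul_of_permLen_lt {n : ℕ} {x : Perm (Fin n)} {a b : Fin n}
    (hlen : permLen x < permLen (swap a b * x)) (p q : Fin n) :
    permRank x p q ≤ permRank (swap a b * x) p q := by
  obtain ⟨P, rfl⟩ := x.surjective a
  obtain ⟨Q, rfl⟩ := x.surjective b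
  rcases lt_trichotomy P Q with hPQ | rfl | hQP
  · exact permRank_le_swap_mul hPQ (apply_lt_of_permLen_lt_swap_mul hPQ hlen) p q
  · rw [swap_self, ← Perm.one_def, one_mul] at hlen
    exact (lt_irrefl _ hlen).elim
  · rw [swap_comm] at hlen ⊢
    exact permRank_le_swap_mul hQP (apply_lt_of_permLen_lt_swap_mul hQP hlen) p q

lemma permRank_le_of_permBruhatLE {n : ℕ} {x y : Perm (Fin n)} (h : permBruhatLE x y)
    (p q : Fin n) : permRank x p q ≤ permRank y p q := by
  induction h with
  | refl => rfl
  | tail _ hstep ih =>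
    obtain ⟨⟨a, b, -, rfl⟩, hlen⟩ := hstep
    exact ih.trans (permRank_le_swap_mul_of_permLen_lt hlen p q)

lemma permRank_eq_of_forall_le_apply {n : ℕ} {σ : Perm (Fin n)} {p q : Fin n}
    (h : ∀ a ≤ p, q ≤ σ a) : permRank σ p q = p + 1 := by
  rw [permRank, filter_true_of_mem fun a ha => h a (mem_Iic.1 ha), Fin.card_Iic]

lemma le_apply_of_succ_le_permRank {n : ℕ} {σ : Perm (Fin n)} {p q a : Fin n}
    (h : p + 1 ≤ permRank σ p q) (ha : a ≤ p) : q ≤ σ a := by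
  have hfull := eq_of_subset_of_card_le (filter_subset (q ≤ σ ·) (Iic p))
    (by rw [Fin.card_Iic]; exact h)
  rw [← mem_Iic, ← hfull, mem_filter] at ha
  exact ha.2

lemma exists_lt_apply_lt_of_ne_revPerm {n : ℕ} {σ : Perm (Fin n)} (h : σ ≠ Fin.revPerm) :
    ∃ P Q, P < Q ∧ σ P < σ Q := by
  by_contra! hσ
  have hanti : StrictAnti σ := fun a b hab => (hσ a b hab).lt_of_ne (σ.injective.ne hab.ne')
  refine h (Equiv.ext fun a => ?_)
  simpa using congrFun (hanti.comp Fin.rev_strictAnti).eq_id a.rev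

theorem permBruhatLE_revPerm {n : ℕ} (σ : Perm (Fin n)) : permBruhatLE σ Fin.revPerm := by
  by_cases h : σ = Fin.revPerm
  · exact h ▸ .refl
  obtain ⟨P, Q, hPQ, hσ⟩ := exists_lt_apply_lt_of_ne_revPerm h
  exact .head ⟨⟨_, _, hσ.ne, rfl⟩, permLen_lt_swap_mul hPQ hσ⟩ (permBruhatLE_revPerm _)
termination_by n * n - permLen σ
decreasing_by
  have := permLen_lt_swap_mul hPQ hσ
  have := permLen_le_sq (swap (σ P) (σ Q) * σ)
  omega

lemma eq_revPerm_of_forall_rev_le {n : ℕ} {σ : Perm (Fin n)} (h : ∀ a, a.rev ≤ σ a) :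
    σ = Fin.revPerm := by
  have hsum : ∑ a : Fin n, (a.rev : ℕ) = ∑ a, (σ a : ℕ) := by
    rw [Equiv.sum_comp σ (fun a => (a : ℕ)), ← Equiv.sum_comp Fin.revPerm (fun a => (a : ℕ))]
    rfl
  have := (sum_eq_sum_iff_of_le fun a _ => Fin.le_def.1 (h a)).1 hsum
  exact Equiv.ext fun a => Fin.ext (this a (mem_univ a)).symm

lemma rev_castSucc_le_mul_swap_last {k : ℕ} {w : Perm (Fin (k + 1))}
    (hw : ∀ i : Fin (k + 1), (w i : ℕ) = if (i : ℕ) < k then k - 1 - (i : ℕ) else k)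
    (i : Fin k) {a : Fin (k + 1)} (ha : a ≤ i.castSucc) :
    i.castSucc.rev ≤ (w * swap i.castSucc (Fin.last k)) a := by
  rw [Fin.le_def, Fin.val_rev, Perm.mul_apply, swap_apply_def]
  rw [Fin.le_def, Fin.val_castSucc] at ha
  split_ifs with h₁ h₂
  · simp [hw]
  · simp [h₂] at ha
    omega
  · rw [hw, if_pos (by omega)]
    have : (a : ℕ) ≠ i := fun h => h₁ (Fin.ext h)
    rw [Fin.val_castSucc]
    omega

/-- in `S_{k+1}` (modelled on `Fin (k+1)`, `0`-indexed), the Bruhat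
supremum of `{ω_{0,k}·(i,k+1) : 1 ≤ i ≤ k}` is the longest element `ω_{0,k+1}`.
Here `w0k` is `ω_{0,k}` (reversing `{1,…,k}`, fixing `k+1`) and `w0K = ω_{0,k+1}`. -/
theorem stmt_15 {k : ℕ} (w0k w0K : Equiv.Perm (Fin (k + 1)))
    (hw0k : ∀ i : Fin (k + 1), (w0k i : ℕ) = if (i : ℕ) < k then k - 1 - (i : ℕ) else k)
    (hw0K : ∀ i : Fin (k + 1), (w0K i : ℕ) = k - (i : ℕ)) :
    (∀ i : Fin k,
      permBruhatLE (w0k * Equiv.swap (Fin.castSucc i) (Fin.last k)) w0K) ∧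
    (∀ z : Equiv.Perm (Fin (k + 1)),
      (∀ i : Fin k,
        permBruhatLE (w0k * Equiv.swap (Fin.castSucc i) (Fin.last k)) z) →
      permBruhatLE w0K z) := by
  obtain rfl : w0K = Fin.revPerm := Equiv.ext fun a => Fin.ext (by simp [hw0K])
  refine ⟨fun i => permBruhatLE_revPerm _, fun z hz => ?_⟩
  suffices z = Fin.revPerm from this ▸ .refl
  refine eq_revPerm_of_forall_rev_le fun a => ?_
  induction a using Fin.lastCases with
  | last => simp
  | cast i =>
    refine le_apply_of_succ_le_permRank ?_ le_rfl
    calc (i.castSucc : ℕ) + 1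
        = permRank (w0k * swap i.castSucc (Fin.last k)) i.castSucc i.castSucc.rev :=
          (permRank_eq_of_forall_le_apply fun _ ha => rev_castSucc_le_mul_swap_last hw0k i ha).symm
      _ ≤ permRank z i.castSucc i.castSucc.rev := permRank_le_of_permBruhatLE (hz i) _ _
end
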